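/- Let d = 9 and k = 6. The orbit of the row vector δ₂ = (0,1,0,0) ∈ (ℤ/3ℤ)⁴ under right multiplication by the subgroup H₃(9,6) of GL(4, ℤ/3ℤ) generated by the reductions modulo 3 of M₀(9,6) and M₁ is exactly the set {(0,1,a,b) : a, b ∈ ℤ/3ℤ} of 9 vectors. -/

import Mathlib

/-- The monodromy matrix `M₀(d,k)` around `0` of the Picard–Fuchs equation of certain
mirror Calabi–Yau threefolds. -/
def M0 (d k : ℤ) : Matrix (Fin 4) (Fin 4) ℤ :=
  !![1, 1, 0, 0; 0, 1, 0, 0; d, d, 1, 0; 0, -k, -1, 1]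

/-- The monodromy matrix `M₁` around `1`. -/
def M1 : Matrix (Fin 4) (Fin 4) ℤ :=
  !![1, 0, 0, 0; 0, 1, 0, 1; 0, 0, 1, 0; 0, 0, 0, 1]

lemma M0_det (d k : ℤ) : (M0 d k).det = 1 := by
  simp [M0, Matrix.det_succ_row_zero, Fin.sum_univ_succ, Fin.succAbove]

lemma M1_det : M1.det = 1 := by
  simp [M1, Matrix.det_succ_row_zero, Fin.sum_univ_succ, Fin.succAbove]

/-- The reduction modulo `p` of `M₀(d,k)`, as an element of `GL (Fin 4) (ZMod p)`. -/
noncomputable def M0p (p : ℕ) (d k : ℤ) : GL (Fin 4) (ZMod p) :=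
  Matrix.nonsingInvUnit ((M0 d k).map (Int.castRingHom (ZMod p)))
    (by rw [← RingHom.mapMatrix_apply, ← RingHom.map_det, M0_det]; simp)

/-- The reduction modulo `p` of `M₁`, as an element of `GL (Fin 4) (ZMod p)`. -/
noncomputable def M1p (p : ℕ) : GL (Fin 4) (ZMod p) :=
  Matrix.nonsingInvUnit (M1.map (Int.castRingHom (ZMod p)))
    (by rw [← RingHom.mapMatrix_apply, ← RingHom.map_det, M1_det]; simp)

/-!
Both generators preserve the affine plane `{(0, 1, a, b)}`: modulo `p ∣ d, k` they act on it by
the shears `(a, b) ↦ (a - b, b)` and `(a, b) ↦ (a, b + 1)`. A finite set stable under a matrix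
`g` is also stable under `g⁻¹` (an injective self-map of a finite set is onto), so the whole
group preserves the plane. Conversely `δ₂ · M₁ · M₀ʲ · M₁ᵐ = (0, 1, -j, 1 + m)` runs through
the whole plane.
-/

open Matrix

section StableSet

variable {n R : Type*} [Fintype n] [DecidableEq n] [CommRing R]

lemma mapsTo_vecMul_inv {S : Set (n → R)} (hS : S.Finite) {g : GL n R}
    (hg : Set.MapsTo (vecMul · (g : Matrix n n R)) S S) :
    Set.MapsTo (vecMul · ((g⁻¹ : GL n R) : Matrix n n R)) S S := by
  have hinj : Function.Injective (vecMul · (g : Matrix n n R)) := fun u w h => by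
    simpa only [vecMul_vecMul, ← Units.val_mul, mul_inv_cancel, Units.val_one, vecMul_one]
      using congrArg (vecMul · ((g⁻¹ : GL n R) : Matrix n n R)) h
  intro w hw
  obtain ⟨u, hu, rfl⟩ := ((hS.injOn_iff_bijOn_of_mapsTo hg).mp hinj.injOn).surjOn hw
  simpa only [vecMul_vecMul, ← Units.val_mul, mul_inv_cancel, Units.val_one, vecMul_one]
    using hu

lemma mapsTo_vecMul_of_mem_closure {S : Set (n → R)} (hS : S.Finite) {T : Set (GL n R)}
    (hT : ∀ g ∈ T, Set.MapsTo (vecMul · (g : Matrix n n R)) S S) {g : GL n R}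
    (hg : g ∈ Subgroup.closure T) :
    Set.MapsTo (vecMul · (g : Matrix n n R)) S S := by
  induction hg using Subgroup.closure_induction with
  | mem g hg => exact hT g hg
  | one => exact fun w hw => by simpa only [Units.val_one, vecMul_one] using hw
  | mul g h _ _ hg hh =>
    exact fun w hw => by simpa only [Units.val_mul, ← vecMul_vecMul] using hh (hg hw)
  | inv g _ hg => exact mapsTo_vecMul_inv hS hg

end StableSet

section Monodromy

variable {p : ℕ}

lemma coe_M0p (d k : ℤ) :
    (M0p p d k : Matrix (Fin 4) (Fin 4) (ZMod p)) = (M0 d k).map (Int.castRingHom (ZMod p)) :=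
  rfl

lemma coe_M1p : (M1p p : Matrix (Fin 4) (Fin 4) (ZMod p)) = M1.map (Int.castRingHom (ZMod p)) :=
  rfl

lemma vecMul_M0p {d k : ℤ} (hd : (p : ℤ) ∣ d) (hk : (p : ℤ) ∣ k) (a b : ZMod p) :
    vecMul ![0, 1, a, b] (M0p p d k : Matrix (Fin 4) (Fin 4) (ZMod p)) = ![0, 1, a - b, b] := by
  have hd : (d : ZMod p) = 0 := (ZMod.intCast_zmod_eq_zero_iff_dvd d p).mpr hd
  have hk : (k : ZMod p) = 0 := (ZMod.intCast_zmod_eq_zero_iff_dvd k p).mpr hk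
  ext i
  fin_cases i <;> simp [coe_M0p, M0, vecMul, dotProduct, Fin.sum_univ_four, hd, hk, sub_eq_add_neg]

lemma vecMul_M1p (a b : ZMod p) :
    vecMul ![0, 1, a, b] (M1p p : Matrix (Fin 4) (Fin 4) (ZMod p)) = ![0, 1, a, b + 1] := by
  ext i
  fin_cases i <;> simp [coe_M1p, M1, vecMul, dotProduct, Fin.sum_univ_four, add_comm]

lemma vecMul_M0p_pow {d k : ℤ} (hd : (p : ℤ) ∣ d) (hk : (p : ℤ) ∣ k) (a b : ZMod p) (j : ℕ) :
    vecMul ![0, 1, a, b] ((M0p p d k ^ j : GL (Fin 4) (ZMod p)) : Matrix (Fin 4) (Fin 4) (ZMod p))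
      = ![0, 1, a - j * b, b] := by
  induction j with
  | zero => simp
  | succ j ih =>
    rw [pow_succ, Units.val_mul, ← vecMul_vecMul, ih, vecMul_M0p hd hk]
    push_cast
    ring_nf

lemma vecMul_M1p_pow (a b : ZMod p) (m : ℕ) :
    vecMul ![0, 1, a, b] ((M1p p ^ m : GL (Fin 4) (ZMod p)) : Matrix (Fin 4) (Fin 4) (ZMod p))
      = ![0, 1, a, b + m] := by
  induction m with
  | zero => simp
  | succ m ih =>
    rw [pow_succ, Units.val_mul, ← vecMul_vecMul, ih, vecMul_M1p]
    push_cast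
    ring_nf

end Monodromy

theorem orbit_delta2_eq_of_dvd (p : ℕ) [NeZero p] (d k : ℤ) (hd : (p : ℤ) ∣ d)
    (hk : (p : ℤ) ∣ k) :
    {w : Fin 4 → ZMod p |
      ∃ g ∈ Subgroup.closure {M0p p d k, M1p p},
        w = vecMul ![0, 1, 0, 0] (g : Matrix (Fin 4) (Fin 4) (ZMod p))} =
    {w : Fin 4 → ZMod p | ∃ a b : ZMod p, w = ![0, 1, a, b]} := by
  set S := {w : Fin 4 → ZMod p | ∃ a b : ZMod p, w = ![0, 1, a, b]}
  have hS : S.Finite := (Set.finite_range fun ab : ZMod p × ZMod p => ![0, 1, ab.1, ab.2]).subset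
    fun _ ⟨a, b, hw⟩ => ⟨(a, b), hw.symm⟩
  have hgen : ∀ g ∈ ({M0p p d k, M1p p} : Set _),
      Set.MapsTo (vecMul · (g : Matrix (Fin 4) (Fin 4) (ZMod p))) S S := by
    rintro g (rfl | rfl) _ ⟨a, b, rfl⟩
    exacts [⟨a - b, b, vecMul_M0p hd hk a b⟩, ⟨a, b + 1, vecMul_M1p a b⟩]
  ext w
  constructor
  · rintro ⟨g, hg, rfl⟩
    exact mapsTo_vecMul_of_mem_closure hS hgen hg ⟨0, 0, rfl⟩
  · rintro ⟨a, b, rfl⟩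
    refine ⟨M1p p * M0p p d k ^ (-a).val * M1p p ^ (b - 1).val,
      mul_mem (mul_mem (Subgroup.subset_closure (by simp))
        (pow_mem (Subgroup.subset_closure (by simp)) _))
        (pow_mem (Subgroup.subset_closure (by simp)) _), ?_⟩
    simp only [Units.val_mul, ← vecMul_vecMul, vecMul_M1p, vecMul_M0p_pow hd hk,
      vecMul_M1p_pow, ZMod.natCast_zmod_val]
    ring_nf

theorem orbit3_delta2_96 :
    {w : Fin 4 → ZMod 3 |
      ∃ g ∈ Subgroup.closure {M0p 3 9 6, M1p 3},
        w = Matrix.vecMul ![0,1,0,0] (g : Matrix (Fin 4) (Fin 4) (ZMod 3))} =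
    {w : Fin 4 → ZMod 3 | ∃ a b : ZMod 3, w = ![0, 1, a, b]} :=
  orbit_delta2_eq_of_dvd 3 9 6 (by norm_num) (by norm_num)
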